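/- arXiv:2412.06480 — 2 statements merged into one kernel-verified Lean document; each statement's English description precedes it below -/
import Mathlib

section
/- Suppose I_ε : [0,T] × D_ε → ℝ satisfies the ODE system dI_ε/dt(t,x_i) = μ_I Δ_ε I_ε(t,x_i) + β(x_i) S_ε I_ε/(S_ε+I_ε+R_ε)(t,x_i) - α(x_i) I_ε(t,x_i), with nonnegative data S_ε, I_ε, R_ε, bounded initial conditions 0 ≤ I_ε(0,x_i) ≤ M, and nonnegative continuous rates α, β with β̄ = sup β. Then for every t ∈ [0,T] and every grid point x_i, I_ε(t,x_i) ≤ M e^{β̄ t}. In particular sup_{0≤t≤T} ‖I_ε(t)‖_∞ ≤ M e^{β̄ T}, uniformly in ε. -/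
noncomputable section
open Real Set Filter Topology

/-- Discrete Laplacian `Δ_ε f (x) = ε⁻²(f(x+ε) - 2f(x) + f(x-ε))` with `ε = 1/n`,
on the periodic grid `D_ε` modelled as `ZMod n`. -/
def dlap (n : ℕ) (f : ZMod n → ℝ) (x : ZMod n) : ℝ :=
    ((n : ℝ)⁻¹ ^ 2)⁻¹ * (f (x + 1) - 2 * f x + f (x - 1))

/-- If `I_ε` solves the infection equation of the discrete SIR system with nonnegative
data, initial condition bounded by `M`, and infection rate bounded by `β̄`, then
`I_ε(t,x) ≤ M e^{β̄ t}` for all `t ∈ [0,T]`, uniformly in the grid point and in `ε`. -/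
theorem stmt8 (n : ℕ) [NeZero n] (T μI M βbar : ℝ)
    (hT : 0 ≤ T) (hμ : 0 < μI) (hM : 0 ≤ M) (hβbar : 0 ≤ βbar)
    (S I R : ℝ → ZMod n → ℝ) (α β : ZMod n → ℝ)
    (hα : ∀ x, 0 ≤ α x) (hβ : ∀ x, 0 ≤ β x) (hβb : ∀ x, β x ≤ βbar)
    (hS : ∀ t x, 0 ≤ S t x) (hI : ∀ t x, 0 ≤ I t x) (hR : ∀ t x, 0 ≤ R t x)
    (hI0 : ∀ x, I 0 x ≤ M)
    (hode : ∀ t ∈ Icc (0 : ℝ) T, ∀ x, HasDerivAt (fun s => I s x)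
      (μI * dlap n (I t) x
        + β x * S t x * I t x / (S t x + I t x + R t x) - α x * I t x) t) :
    ∀ t ∈ Icc (0 : ℝ) T, ∀ x, I t x ≤ M * Real.exp (βbar * t) := by
  have hne : (Finset.univ : Finset (ZMod n)).Nonempty := Finset.univ_nonempty
  set F : ℝ → ℝ := fun t => Finset.univ.sup' hne (fun x => I t x) with hFdef
  have hle : ∀ t x, I t x ≤ F t := fun t x => Finset.le_sup' _ (Finset.mem_univ x)
  have hcont : ∀ x : ZMod n, ∀ t ∈ Icc (0:ℝ) T, ContinuousAt (fun s => I s x) t :=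
    fun x t ht => (hode t ht x).continuousAt
  have hFc : ContinuousOn F (Icc 0 T) := fun t ht =>
    (ContinuousAt.finset_sup'_apply hne (fun x _ => hcont x t ht)).continuousWithinAt
  have key : ∀ t ∈ Icc (0:ℝ) T, F t ≤ gronwallBound M βbar 0 (t - 0) := by
    apply le_gronwallBound_of_liminf_deriv_right_le (f' := fun t => βbar * F t) hFc
    · -- slope condition
      intro t ht r hr
      apply Filter.Eventually.frequently
      have hev : ∀ x : ZMod n, ∀ᶠ z in 𝓝[>] t, I z x < F t + r * (z - t) := by
        intro x
        rcases lt_or_ge (I t x) (F t) with hlt | hge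
        · -- non-maximizer: continuity argument
          have hc : Tendsto (fun z => I z x) (𝓝[>] t) (𝓝 (I t x)) :=
            (hcont x t (Ico_subset_Icc_self ht)).tendsto.mono_left nhdsWithin_le_nhds
          set c : ℝ := (F t - I t x) / 2 with hc'
          have hcpos : 0 < c := by linarith
          have h1 : ∀ᶠ z in 𝓝[>] t, I z x < I t x + c :=
            hc.eventually_lt_const (by linarith)
          have h2 : Tendsto (fun z : ℝ => r * (z - t)) (𝓝[>] t) (𝓝 0) := by
            have : Tendsto (fun z : ℝ => r * (z - t)) (𝓝 t) (𝓝 (r * (t - t))) :=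
              (continuous_const.mul (continuous_id.sub continuous_const)).tendsto t
            simpa using this.mono_left nhdsWithin_le_nhds
          have h3 : ∀ᶠ z in 𝓝[>] t, -c < r * (z - t) :=
            h2.eventually_const_lt (by linarith)
          filter_upwards [h1, h3] with z hz1 hz3
          have : I t x + c = F t - c := by rw [hc']; ring
          linarith
        · -- maximizer: use the ODE and the maximum principle
          have hmax : I t x = F t := le_antisymm (hle t x) hge
          have ht' : t ∈ Icc (0:ℝ) T := Ico_subset_Icc_self ht
          set D : ℝ := μI * dlap n (I t) x
              + β x * S t x * I t x / (S t x + I t x + R t x) - α x * I t x with hD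
          have hDle : D ≤ βbar * F t := by
            have hlap : dlap n (I t) x ≤ 0 := by
              have h1 : I t (x + 1) ≤ I t x := hmax ▸ hle t (x + 1)
              have h2 : I t (x - 1) ≤ I t x := hmax ▸ hle t (x - 1)
              have : I t (x + 1) - 2 * I t x + I t (x - 1) ≤ 0 := by linarith
              exact mul_nonpos_of_nonneg_of_nonpos (by positivity) this
            have hinf : β x * S t x * I t x / (S t x + I t x + R t x) ≤ βbar * I t x := by
              rcases eq_or_lt_of_le
                  (by linarith [hS t x, hI t x, hR t x] : (0:ℝ) ≤ S t x + I t x + R t x) with h0 | h0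
              · rw [← h0, div_zero]
                exact mul_nonneg hβbar (hI t x)
              · rw [div_le_iff₀ h0]
                have hb1 : β x * S t x ≤ βbar * (S t x + I t x + R t x) := by
                  have := mul_le_mul (hβb x)
                    (by linarith [hI t x, hR t x] : S t x ≤ S t x + I t x + R t x)
                    (hS t x) hβbar
                  linarith
                calc β x * S t x * I t x ≤ βbar * (S t x + I t x + R t x) * I t x :=
                      mul_le_mul_of_nonneg_right hb1 (hI t x)
                  _ = βbar * I t x * (S t x + I t x + R t x) := by ring
            have hrec : 0 ≤ α x * I t x := mul_nonneg (hα x) (hI t x)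
            have := mul_nonpos_of_nonneg_of_nonpos hμ.le hlap
            rw [hD, ← hmax]
            linarith
          have hDr : D < r := lt_of_le_of_lt hDle hr
          have hslope : Tendsto (slope (fun s => I s x) t) (𝓝[>] t) (𝓝 D) :=
            ((hasDerivAt_iff_tendsto_slope.mp (hode t ht' x)).mono_left
              (nhdsWithin_mono t fun z hz => ne_of_gt hz))
          have h1 : ∀ᶠ z in 𝓝[>] t, slope (fun s => I s x) t z < r :=
            hslope.eventually_lt_const hDr
          filter_upwards [h1, self_mem_nhdsWithin] with z hz1 hz2
          have hzt : 0 < z - t := sub_pos.2 hz2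
          rw [slope_def_field, div_lt_iff₀ hzt] at hz1
          have : I z x < I t x + r * (z - t) := by linarith
          rwa [hmax] at this
      have hall : ∀ᶠ z in 𝓝[>] t, ∀ x : ZMod n, I z x < F t + r * (z - t) :=
        eventually_all.mpr hev
      filter_upwards [hall, self_mem_nhdsWithin] with z hz1 hz2
      have hzt : 0 < z - t := sub_pos.2 hz2
      have hFz : F z < F t + r * (z - t) := by
        rw [hFdef]
        exact Finset.sup'_lt_iff hne |>.mpr fun x _ => hz1 x
      have h1 : (z - t)⁻¹ * (F z - F t) < (z - t)⁻¹ * (r * (z - t)) :=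
        mul_lt_mul_of_pos_left (by linarith) (inv_pos.2 hzt)
      have h2 : (z - t)⁻¹ * (r * (z - t)) = r := by field_simp
      linarith
    · exact Finset.sup'_le hne _ fun x _ => hI0 x
    · intro t ht
      rw [add_zero]
  intro t ht x
  have := key t ht
  rw [sub_zero, gronwallBound_ε0] at this
  exact (hle t x).trans this
end
end

section
/- Let S_ε solve dS_ε/dt(t,x) = μ_S Δ_ε S_ε(t,x) - c_ε(t,x) S_ε(t,x) on the periodic grid, where the coefficient satisfies 0 ≤ c_ε(t,x) ≤ β̄ for all t, x, and S_ε(0,x) ≥ c > 0 for all x. Then for all t ≥ 0 and all grid points x, S_ε(t,x) ≥ c e^{-β̄ t}. In particular, for every T > 0 there is c_T = c e^{-β̄ T} > 0, independent of ε, with S_ε(t,x) ≥ c_T for all 0 ≤ t ≤ T and all x. -/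
/-!
Multiplying by `e^{β̄ t}` turns the equation into `u' = μ_S Δ_ε u + (β̄ - c_ε) u`, with a nonnegative
zeroth-order coefficient, and it suffices to show `min_x u(t, x) ≥ c`. At a grid point where `u(t, ·)`
is minimal, `Δ_ε u ≥ 0`, so `u' ≥ (β̄ - c_ε) u ≥ β̄ min(u - c, 0)`. Hence the lower right Dini
derivative of the minimum over the finite grid is at least `β̄ min(min u - c, 0)`, and comparing
`c - min u` with the barriers `δ e^{(β̄+1)t}` gives `min u ≥ c`.
-/

noncomputable section
open Real Set

open Filter Topology

theorem eventually_lt_slope_finset_inf' {ι : Type*} [Fintype ι] [Nonempty ι] {u : ℝ → ι → ℝ}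
    {u' : ι → ℝ} {t r : ℝ} (hu : ∀ i, HasDerivAt (fun s => u s i) (u' i) t)
    (hr : ∀ i, (∀ j, u t i ≤ u t j) → r < u' i) :
    ∀ᶠ z in 𝓝[>] t, r < slope (fun s => Finset.univ.inf' Finset.univ_nonempty (u s)) t z := by
  set m : ℝ → ℝ := fun s => Finset.univ.inf' Finset.univ_nonempty (u s)
  have hm_le : ∀ i, m t ≤ u t i := fun i => Finset.inf'_le _ (Finset.mem_univ i)
  have above : ∀ i, ∀ᶠ z in 𝓝[>] t, m t + r * (z - t) < u z i := by
    intro i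
    rcases (hm_le i).lt_or_eq with hlt | heq
    · have hcont : ContinuousAt (fun z => u z i - r * (z - t)) t := by
        have := (hu i).continuousAt
        fun_prop
      have hev : ∀ᶠ z in 𝓝 t, m t < u z i - r * (z - t) :=
        hcont.eventually (eventually_gt_nhds (by simpa using hlt))
      filter_upwards [nhdsWithin_le_nhds hev] with z hz
      linarith
    · have hmin : ∀ j, u t i ≤ u t j := fun j => heq ▸ hm_le j
      have hslope : ∀ᶠ z in 𝓝[>] t, r < slope (fun s => u s i) t z :=
        (hasDerivWithinAt_iff_tendsto_slope' (lt_irrefl t)).1 (hu i).hasDerivWithinAt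
          (Ioi_mem_nhds (hr i hmin))
      filter_upwards [hslope, self_mem_nhdsWithin] with z hz (hzt : t < z)
      rw [slope_def_field, lt_div_iff₀ (sub_pos.2 hzt)] at hz
      linarith
  filter_upwards [eventually_all.2 above, self_mem_nhdsWithin] with z hz (hzt : t < z)
  have : m t + r * (z - t) < m z := (Finset.lt_inf'_iff _).2 fun i _ => hz i
  rw [slope_def_field, lt_div_iff₀ (sub_pos.2 hzt)]
  linarith

theorem le_image_of_liminf_slope_right_ge {m : ℝ → ℝ} {c K : ℝ}
    (hm : ContinuousOn m (Ici 0)) (h0 : c ≤ m 0)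
    (hslope : ∀ t, 0 ≤ t → ∀ r < K * min (m t - c) 0, ∃ᶠ z in 𝓝[>] t, r < slope m t z) :
    ∀ t, 0 ≤ t → c ≤ m t := by
  intro t ht
  have barrier : ∀ δ > 0, c - m t ≤ δ * exp ((K + 1) * t) := by
    intro δ hδ
    refine image_le_of_liminf_slope_right_lt_deriv_boundary (f := fun s => c - m s)
      (f' := fun s => -(K * min (m s - c) 0)) (B := fun s => δ * exp ((K + 1) * s))
      (B' := fun s => δ * ((K + 1) * exp ((K + 1) * s)))
      (continuousOn_const.sub (hm.mono Icc_subset_Ici_self)) ?_ (by simp; linarith) ?_ ?_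
      ⟨ht, le_rfl⟩
    · intro s hs r hr
      refine (hslope s hs.1 (-r) (by linarith)).mono fun z hz => ?_
      rw [slope_def_field] at hz ⊢
      rw [show (c - m z - (c - m s)) / (z - s) = -((m z - m s) / (z - s)) by ring]
      linarith
    · intro s
      simpa [mul_comm] using (((hasDerivAt_id s).const_mul (K + 1)).exp.const_mul δ)
    · intro s _ hcontact
      have hpos : 0 < δ * exp ((K + 1) * s) := by positivity
      have hms : m s - c = -(δ * exp ((K + 1) * s)) := by linarith
      rw [hms, min_eq_left (by linarith)]
      linarith
  refine le_of_forall_pos_le_add fun ε hε => ?_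
  have := barrier (ε / exp ((K + 1) * t)) (by positivity)
  rw [div_mul_cancel₀ _ (exp_pos _).ne'] at this
  linarith

theorem le_of_hasDerivAt_of_deriv_ge_at_min {ι : Type*} [Fintype ι] {u u' : ℝ → ι → ℝ} {c K : ℝ}
    (hu : ∀ t, 0 ≤ t → ∀ i, HasDerivAt (fun s => u s i) (u' t i) t)
    (h0 : ∀ i, c ≤ u 0 i)
    (hmin : ∀ t, 0 ≤ t → ∀ i, (∀ j, u t i ≤ u t j) → K * min (u t i - c) 0 ≤ u' t i) :
    ∀ t, 0 ≤ t → ∀ i, c ≤ u t i := by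
  cases isEmpty_or_nonempty ι
  · exact fun _ _ i => isEmptyElim i
  set m : ℝ → ℝ := fun s => Finset.univ.inf' Finset.univ_nonempty (u s)
  have hm_le : ∀ t i, m t ≤ u t i := fun t i => Finset.inf'_le _ (Finset.mem_univ i)
  have hm_bound : ∀ t, 0 ≤ t → c ≤ m t := by
    refine le_image_of_liminf_slope_right_ge (K := K) (fun t ht => ?_)
      (Finset.le_inf' _ _ fun i _ => h0 i) (fun t ht r hr => ?_)
    · exact (ContinuousAt.finset_inf'_apply _ fun i _ =>
        (hu t ht i).continuousAt).continuousWithinAt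
    · refine (eventually_lt_slope_finset_inf' (hu t ht) fun i hi => ?_).frequently
      have hmi : m t = u t i := le_antisymm (hm_le t i) (Finset.le_inf' _ _ fun j _ => hi j)
      rw [hmi] at hr
      exact hr.trans_le (hmin t ht i hi)
  exact fun t ht i => (hm_bound t ht).trans (hm_le t i)

theorem dlap_nonneg_of_forall_le {n : ℕ} {f : ZMod n → ℝ} {x : ZMod n} (hx : ∀ y, f x ≤ f y) :
    0 ≤ dlap n f x :=
  mul_nonneg (by positivity) (by linarith [hx (x + 1), hx (x - 1)])

theorem dlap_const_mul (n : ℕ) (a : ℝ) (f : ZMod n → ℝ) (x : ZMod n) :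
    dlap n (fun y => a * f y) x = a * dlap n f x := by
  unfold dlap
  ring

theorem stmt9_general (n : ℕ) [NeZero n] (μS βbar c : ℝ)
    (hμ : 0 < μS) (hc : 0 < c)
    (S : ℝ → ZMod n → ℝ) (cf : ℝ → ZMod n → ℝ)
    (hcf0 : ∀ t x, 0 ≤ cf t x) (hcfb : ∀ t x, cf t x ≤ βbar)
    (hS0 : ∀ x, c ≤ S 0 x)
    (hode : ∀ t : ℝ, 0 ≤ t → ∀ x, HasDerivAt (fun s => S s x)
      (μS * dlap n (S t) x - cf t x * S t x) t) :
    ∀ t : ℝ, 0 ≤ t → ∀ x, c * Real.exp (-βbar * t) ≤ S t x := by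
  set Sb : ℝ → ZMod n → ℝ := fun s y => exp (βbar * s) * S s y with hSb
  have hderiv : ∀ t, 0 ≤ t → ∀ x, HasDerivAt (fun s => Sb s x)
      (μS * dlap n (Sb t) x + (βbar - cf t x) * Sb t x) t := by
    intro t ht x
    have hexp : HasDerivAt (fun s => exp (βbar * s)) (βbar * exp (βbar * t)) t := by
      simpa [mul_comm] using ((hasDerivAt_id t).const_mul βbar).exp
    refine (hexp.mul (hode t ht x)).congr_deriv ?_
    rw [hSb, dlap_const_mul]
    ring
  have hmin : ∀ t, 0 ≤ t → ∀ x, (∀ y, Sb t x ≤ Sb t y) →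
      βbar * min (Sb t x - c) 0 ≤ μS * dlap n (Sb t) x + (βbar - cf t x) * Sb t x := by
    intro t _ x hx
    have hlap := mul_nonneg hμ.le (dlap_nonneg_of_forall_le hx)
    have hcf := hcf0 t x
    have hcf' := hcfb t x
    rcases le_or_gt 0 (Sb t x) with hpos | hneg
    · nlinarith [min_le_right (Sb t x - c) 0]
    · rw [min_eq_left (by linarith)]
      nlinarith
  intro t ht x
  have hSbt : c ≤ exp (βbar * t) * S t x :=
    le_of_hasDerivAt_of_deriv_ge_at_min hderiv (fun x => by simpa [hSb] using hS0 x) hmin t ht x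
  rw [neg_mul, exp_neg, ← div_eq_mul_inv, div_le_iff₀ (exp_pos _)]
  linarith

/-- If `S_ε` solves `dS_ε/dt = μ_S Δ_ε S_ε - c_ε S_ε` with `0 ≤ c_ε ≤ β̄` and
`S_ε(0,·) ≥ c > 0`, then `S_ε(t,x) ≥ c e^{-β̄ t}` for all `t ≥ 0` and all grid points,
independently of `ε`. -/
theorem stmt9 (n : ℕ) [NeZero n] (μS βbar c : ℝ)
    (hμ : 0 < μS) (hβbar : 0 ≤ βbar) (hc : 0 < c)
    (S : ℝ → ZMod n → ℝ) (cf : ℝ → ZMod n → ℝ)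
    (hcf0 : ∀ t x, 0 ≤ cf t x) (hcfb : ∀ t x, cf t x ≤ βbar)
    (hS0 : ∀ x, c ≤ S 0 x)
    (hode : ∀ t : ℝ, 0 ≤ t → ∀ x, HasDerivAt (fun s => S s x)
      (μS * dlap n (S t) x - cf t x * S t x) t) :
    ∀ t : ℝ, 0 ≤ t → ∀ x, c * Real.exp (-βbar * t) ≤ S t x :=
  stmt9_general n μS βbar c hμ hc S cf hcf0 hcfb hS0 hode
end
end
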